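/- If (λ,μ) is an admissible fibring pair, then the strong fibring [L₁ ⊙ L₂]_(λ,μ) is a strong conservative extension of L₁: for every Γ ∪ {φ} ⊆ L(C₁), Γ ⊨_{M₁} φ if and only if Γ ⊨_{M_(λ,μ)} φ. -/

import Mathlib

/-!
Since `∗_μ` is the identity on `A₁`, it is a surjection `A₁ ⊎ A₂ → A₁`; on formulas of `L(C₁)` it
turns evaluation in the fibred matrix into evaluation in `M₁`, and admissibility of `μ` makes it
reflect designated values. Hence the valuations of `M_(λ,μ)` test a consequence of `L(C₁)` exactly
as the valuations of `M₁` do.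
-/

set_option autoImplicit false

namespace Fibring

/-- Propositional formulas over a signature `C` with arity function `ar`. -/
inductive Fm (C : Type) (ar : C → ℕ) : Type
  | var : ℕ → Fm C ar
  | app : (c : C) → (Fin (ar c) → Fm C ar) → Fm C ar

/-- Homomorphic extension of a valuation `v` to all formulas, relative to an
interpretation `I` of the connectives. -/
def eval {C A : Type} {ar : C → ℕ}
    (I : (c : C) → (Fin (ar c) → A) → A) (v : ℕ → A) : Fm C ar → A
  | .var n => v n
  | .app c args => I c fun i => eval I v (args i)

/-- Matrix consequence relation. -/
def Mdl {C A : Type} {ar : C → ℕ}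
    (I : (c : C) → (Fin (ar c) → A) → A) (D : Set A)
    (Γ : Set (Fm C ar)) (φ : Fm C ar) : Prop :=
  ∀ v : ℕ → A, (∀ ψ ∈ Γ, eval I v ψ ∈ D) → eval I v φ ∈ D

/-- Substitution. -/
def subst {C : Type} {ar : C → ℕ} (σ : ℕ → Fm C ar) : Fm C ar → Fm C ar
  | .var n => σ n
  | .app c args => .app c fun i => subst σ (args i)

variable {C₁ C₂ A₁ A₂ : Type} {ar₁ : C₁ → ℕ} {ar₂ : C₂ → ℕ}

/-- The coercion `∗_μ : A₁ ⊎ A₂ → A₁`. -/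
def starMu (mu : A₂ → A₁) : A₁ ⊕ A₂ → A₁ := Sum.elim id mu

/-- The coercion `∗_λ : A₁ ⊎ A₂ → A₂`. -/
def starLa (lam : A₁ → A₂) : A₁ ⊕ A₂ → A₂ := Sum.elim lam id

/-- Interpretation of the fibred matrix `M_(λ,μ)`. -/
def fibInterp (I₁ : (c : C₁) → (Fin (ar₁ c) → A₁) → A₁)
    (I₂ : (c : C₂) → (Fin (ar₂ c) → A₂) → A₂)
    (lam : A₁ → A₂) (mu : A₂ → A₁) :
    (c : C₁ ⊕ C₂) → (Fin (Sum.elim ar₁ ar₂ c) → A₁ ⊕ A₂) → A₁ ⊕ A₂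
  | .inl c, args => Sum.inl (I₁ c fun i => starMu mu (args i))
  | .inr c, args => Sum.inr (I₂ c fun i => starLa lam (args i))

/-- Designated values of the fibred matrix: `D₁ ⊎ D₂`. -/
def Dfib (D₁ : Set A₁) (D₂ : Set A₂) : Set (A₁ ⊕ A₂) :=
  Sum.inl '' D₁ ∪ Sum.inr '' D₂

/-- Admissible fibring pairs: `λ` and `μ` preserve and reflect designatedness. -/
def Admissible (D₁ : Set A₁) (D₂ : Set A₂) (lam : A₁ → A₂) (mu : A₂ → A₁) : Prop :=
  (∀ x, lam x ∈ D₂ ↔ x ∈ D₁) ∧ (∀ y, mu y ∈ D₁ ↔ y ∈ D₂)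

/-- Recursive extension of a simple fibred valuation to the fibred language. -/
def sfvExt (I₁ : (c : C₁) → (Fin (ar₁ c) → A₁) → A₁)
    (I₂ : (c : C₂) → (Fin (ar₂ c) → A₂) → A₂)
    (lam : A₁ → A₂) (mu : A₂ → A₁) (v : ℕ → A₁ ⊕ A₂) :
    Fm (C₁ ⊕ C₂) (Sum.elim ar₁ ar₂) → A₁ ⊕ A₂
  | .var n => v n
  | .app (.inl c) args =>
      Sum.inl (I₁ c fun i => starMu mu (sfvExt I₁ I₂ lam mu v (args i)))
  | .app (.inr c) args =>
      Sum.inr (I₂ c fun i => starLa lam (sfvExt I₁ I₂ lam mu v (args i)))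

/-- Inclusion of `L(C₁)` into the fibred language `L(C₁ ⊎ C₂)`. -/
def inj₁ (ar₂ : C₂ → ℕ) : Fm C₁ ar₁ → Fm (C₁ ⊕ C₂) (Sum.elim ar₁ ar₂)
  | .var n => .var n
  | .app c args => .app (Sum.inl c) fun i => inj₁ ar₂ (args i)

/-- `Repl c₁ c₂ h φ ψ`: `ψ` results from `φ` by replacing exactly one occurrence
of `c₁` by `c₂`. -/
inductive Repl {C : Type} {ar : C → ℕ} (c₁ c₂ : C) (h : ar c₁ = ar c₂) :
    Fm C ar → Fm C ar → Prop
  | top (args : Fin (ar c₁) → Fm C ar) :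
      Repl c₁ c₂ h (.app c₁ args) (.app c₂ fun i => args (Fin.cast h.symm i))
  | congr (c : C) (args args' : Fin (ar c) → Fm C ar) (j : Fin (ar c))
      (hj : Repl c₁ c₂ h (args j) (args' j))
      (hother : ∀ i, i ≠ j → args i = args' i) :
      Repl c₁ c₂ h (.app c args) (.app c args')

/-- `(c₁,c₂)`-associated formulas: a finite chain of single replacements of
`c₁` by `c₂` or vice versa (including equality). -/
def Assoc {C : Type} {ar : C → ℕ} (c₁ c₂ : C) (h : ar c₁ = ar c₂)
    (φ₁ φ₂ : Fm C ar) : Prop :=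
  Relation.EqvGen (Repl c₁ c₂ h) φ₁ φ₂

theorem mdl_iff_forall_comp {C A B : Type} {ar : C → ℕ}
    (I : (c : C) → (Fin (ar c) → A) → A) (D : Set A) (Γ : Set (Fm C ar)) (φ : Fm C ar)
    {f : B → A} (hf : Function.Surjective f) :
    Mdl I D Γ φ ↔ ∀ w : ℕ → B, (∀ ψ ∈ Γ, eval I (f ∘ w) ψ ∈ D) → eval I (f ∘ w) φ ∈ D :=
  hf.comp_left.forall

theorem starMu_surjective (mu : A₂ → A₁) : Function.Surjective (starMu mu) :=
  fun a => ⟨Sum.inl a, rfl⟩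

theorem mem_Dfib_iff_starMu_mem {D₁ : Set A₁} {D₂ : Set A₂} {mu : A₂ → A₁}
    (hmu : ∀ y, mu y ∈ D₁ ↔ y ∈ D₂) (x : A₁ ⊕ A₂) :
    x ∈ Dfib D₁ D₂ ↔ starMu mu x ∈ D₁ := by
  cases x <;> simp [Dfib, starMu, hmu]

theorem starMu_eval_inj₁
    (I₁ : (c : C₁) → (Fin (ar₁ c) → A₁) → A₁) (I₂ : (c : C₂) → (Fin (ar₂ c) → A₂) → A₂)
    (lam : A₁ → A₂) (mu : A₂ → A₁) (v : ℕ → A₁ ⊕ A₂) :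
    ∀ φ : Fm C₁ ar₁,
      starMu mu (eval (fibInterp I₁ I₂ lam mu) v (inj₁ ar₂ φ)) = eval I₁ (starMu mu ∘ v) φ
  | .var _ => rfl
  | .app c args => congrArg (I₁ c) (funext fun i => starMu_eval_inj₁ I₁ I₂ lam mu v (args i))

theorem eval_inj₁_mem_Dfib_iff
    (I₁ : (c : C₁) → (Fin (ar₁ c) → A₁) → A₁) (I₂ : (c : C₂) → (Fin (ar₂ c) → A₂) → A₂)
    {D₁ : Set A₁} {D₂ : Set A₂} (lam : A₁ → A₂) {mu : A₂ → A₁}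
    (hmu : ∀ y, mu y ∈ D₁ ↔ y ∈ D₂) (v : ℕ → A₁ ⊕ A₂) (φ : Fm C₁ ar₁) :
    eval (fibInterp I₁ I₂ lam mu) v (inj₁ ar₂ φ) ∈ Dfib D₁ D₂ ↔
      eval I₁ (starMu mu ∘ v) φ ∈ D₁ := by
  rw [mem_Dfib_iff_starMu_mem hmu, starMu_eval_inj₁]

/-- for an admissible pair, the strong fibring is a strong
conservative extension of `L₁`. -/
theorem strong_fibring_conservative
    {C₁ C₂ A₁ A₂ : Type} {ar₁ : C₁ → ℕ} {ar₂ : C₂ → ℕ}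
    (I₁ : (c : C₁) → (Fin (ar₁ c) → A₁) → A₁)
    (I₂ : (c : C₂) → (Fin (ar₂ c) → A₂) → A₂)
    (D₁ : Set A₁) (D₂ : Set A₂)
    (lam : A₁ → A₂) (mu : A₂ → A₁)
    (hadm : Admissible D₁ D₂ lam mu)
    (Γ : Set (Fm C₁ ar₁)) (φ : Fm C₁ ar₁) :
    Mdl I₁ D₁ Γ φ ↔
      Mdl (fibInterp I₁ I₂ lam mu) (Dfib D₁ D₂) (inj₁ ar₂ '' Γ) (inj₁ ar₂ φ) := by
  rw [mdl_iff_forall_comp I₁ D₁ Γ φ (starMu_surjective mu)]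
  refine forall_congr' fun v => ?_
  simp only [Set.forall_mem_image, eval_inj₁_mem_Dfib_iff I₁ I₂ lam hadm.2]

end Fibring
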